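/- There is no real subalgebra R of Z (i.e. an ℝ-subspace of Z closed under the Zorn product) such that H ⊆ R ⊆ S and dim_ℝ R = 6. In other words, no six-dimensional real form of the sextonions contains the divisional quaternions. -/

import Mathlib

/-!
Left multiplication by a nonzero `h ∈ H` is injective on `Z`, since `conj(h) (h y) = N(h) y` with
`N(h) = |α₀|² + |α₁|² ≠ 0`. The ℝ-linear retraction `π` of `Z` onto `H`, in coordinates
`(α⁺, A⁺, A⁻, α⁻) ↦ ((α⁺ + conj α⁻) / 2, (A⁺₁ + conj A⁻₁) / 2)`, satisfies `π (h y) = h π(y)` for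
`h ∈ H`. So for `w ∈ R ∖ H`, `y = w - π w` is a nonzero element of `R` with `π (H y) = 0`, whence
`H ⊕ H y ⊆ R` and `dim_ℝ R ≥ 8`: a real subalgebra containing `H` has dimension `4` or at least `8`.
-/

open Matrix

/-- 3-component complex vectors. -/
abbrev V3 := Fin 3 → ℂ

/-- The standard cross product on ℂ³. -/
def cross (A B : V3) : V3 := crossProduct A B

/-- The Zorn vector-matrix algebra over ℂ: elements x = (α⁺, A⁺, A⁻, α⁻). -/
abbrev Zorn := ℂ × V3 × V3 × ℂ

/-- The Zorn product
x·y = (α⁺β⁺ − ⟨A⁺,B⁻⟩, α⁺B⁺ + β⁻A⁺ + A⁻×B⁻, β⁺A⁻ + α⁻B⁻ + A⁺×B⁺, α⁻β⁻ − ⟨A⁻,B⁺⟩). -/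
noncomputable def zmul (x y : Zorn) : Zorn :=
  ( x.1 * y.1 - x.2.1 ⬝ᵥ y.2.2.1,
    x.1 • y.2.1 + y.2.2.2 • x.2.1 + cross x.2.2.1 y.2.2.1,
    y.1 • x.2.2.1 + x.2.2.2 • y.2.2.1 + cross x.2.1 y.2.1,
    x.2.2.2 * y.2.2.2 - x.2.2.1 ⬝ᵥ y.2.1 )

/-- The unit 1 = (1,0,0,1) of the Zorn algebra. -/
noncomputable def zunit : Zorn := (1, 0, 0, 1)

/-- Membership in the sextonion subspace S : A⁺₃ = 0 and A⁻₂ = 0. -/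
def inS (x : Zorn) : Prop := x.2.1 2 = 0 ∧ x.2.2.1 1 = 0

/-- The sextonion subspace S as a ℂ-submodule of the Zorn algebra. -/
noncomputable def Ssub : Submodule ℂ Zorn where
  carrier := {x | inS x}
  add_mem' := by
    rintro x y ⟨hx1, hx2⟩ ⟨hy1, hy2⟩
    exact ⟨by simp [inS, Prod.fst_add, Prod.snd_add, Pi.add_apply, hx1, hy1],
           by simp [inS, Prod.fst_add, Prod.snd_add, Pi.add_apply, hx2, hy2]⟩
  zero_mem' := ⟨rfl, rfl⟩
  smul_mem' := by
    rintro c x ⟨hx1, hx2⟩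
    exact ⟨by simp [inS, Prod.smul_fst, Prod.smul_snd, Pi.smul_apply, hx1],
           by simp [inS, Prod.smul_fst, Prod.smul_snd, Pi.smul_apply, hx2]⟩

/-- ρ⁺ = (1,0,0,0). -/
noncomputable def rhoP : Zorn := (1, 0, 0, 0)
/-- ρ⁻ = (0,0,0,1). -/
noncomputable def rhoM : Zorn := (0, 0, 0, 1)
/-- ε_k⁺ = (0, e_k, 0, 0). -/
noncomputable def epsP (k : Fin 3) : Zorn := (0, Pi.single k 1, 0, 0)
/-- ε_k⁻ = (0, 0, e_k, 0). -/
noncomputable def epsM (k : Fin 3) : Zorn := (0, 0, Pi.single k 1, 0)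

/-- Membership in the divisional quaternions H ⊂ Z:
H = {α₀ρ⁺ + conj(α₀)ρ⁻ + α₁ε₁⁺ + conj(α₁)ε₁⁻ : α₀, α₁ ∈ ℂ}. -/
noncomputable def inH (z : Zorn) : Prop :=
  ∃ a0 a1 : ℂ, z = a0 • rhoP + (starRingEnd ℂ a0) • rhoM
    + a1 • epsP 0 + (starRingEnd ℂ a1) • epsM 0

open ComplexConjugate

noncomputable def zconj (x : Zorn) : Zorn := (x.2.2.2, -x.2.1, -x.2.2.1, x.1)

noncomputable def znorm (x : Zorn) : ℂ := x.1 * x.2.2.2 + x.2.1 ⬝ᵥ x.2.2.1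

theorem zmul_zconj_zmul (x y : Zorn) : zmul (zconj x) (zmul x y) = znorm x • y := by
  obtain ⟨a, A, B, b⟩ := x
  obtain ⟨c, C, D, d⟩ := y
  simp only [zmul, zconj, znorm, cross, Prod.smul_mk, Prod.mk.injEq, funext_iff,
    Fin.forall_fin_succ]
  simp only [dotProduct, Fin.sum_univ_three, cross_apply, Pi.add_apply, Pi.smul_apply,
    Pi.neg_apply, smul_eq_mul, cons_val_zero, cons_val_succ, cons_val_one, cons_val_two, vecHead,
    vecTail, Function.comp_apply, Fin.succ_zero_eq_one, Fin.succ_one_eq_two, IsEmpty.forall_iff,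
    and_true, LinearMap.neg_apply, map_neg]
  refine ⟨?_, ⟨?_, ?_, ?_⟩, ⟨?_, ?_, ?_⟩, ?_⟩ <;> ring

noncomputable def zmulRight (y : Zorn) : Zorn →ₗ[ℂ] Zorn where
  toFun x := zmul x y
  map_add' x x' := by
    simp only [zmul, cross, Prod.fst_add, Prod.snd_add, map_add, LinearMap.add_apply,
      add_dotProduct, Prod.mk_add_mk, Prod.mk.injEq]
    refine ⟨?_, ?_, ?_, ?_⟩ <;> first | ring1 | module
  map_smul' c x := by
    simp only [zmul, cross, Prod.smul_fst, Prod.smul_snd, map_smul, LinearMap.smul_apply,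
      smul_dotProduct, smul_eq_mul, RingHom.id_apply, Prod.smul_mk, Prod.mk.injEq]
    refine ⟨?_, ?_, ?_, ?_⟩ <;> first | ring1 | module

noncomputable def quat : ℂ × ℂ →ₗ[ℝ] Zorn where
  toFun a := a.1 • rhoP + conj a.1 • rhoM + a.2 • epsP 0 + conj a.2 • epsM 0
  map_add' a b := by simp only [Prod.fst_add, Prod.snd_add, map_add, add_smul]; abel
  map_smul' r a := by
    simp only [Prod.smul_fst, Prod.smul_snd, Complex.real_smul, map_mul, Complex.conj_ofReal,
      RingHom.id_apply, smul_add, mul_smul, Complex.coe_smul]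

theorem inH_quat (a : ℂ × ℂ) : inH (quat a) := ⟨a.1, a.2, rfl⟩

theorem quat_apply (a : ℂ × ℂ) :
    quat a = (a.1, Pi.single 0 a.2, Pi.single 0 (conj a.2), conj a.1) := by
  simp [quat, rhoP, rhoM, epsP, epsM, ← Pi.single_smul]

noncomputable def quatProj : Zorn →ₗ[ℝ] ℂ × ℂ where
  toFun z := ((z.1 + conj z.2.2.2) / 2, (z.2.1 0 + conj (z.2.2.1 0)) / 2)
  map_add' z w := by
    simp only [Prod.fst_add, Prod.snd_add, Pi.add_apply, map_add, Prod.mk_add_mk]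
    congr 1 <;> ring
  map_smul' r z := by
    simp only [Prod.smul_fst, Prod.smul_snd, Pi.smul_apply, Complex.real_smul, map_mul,
      Complex.conj_ofReal, RingHom.id_apply, Prod.smul_mk]
    congr 1 <;> ring

theorem quatProj_quat (a : ℂ × ℂ) : quatProj (quat a) = a := by
  simp [quatProj, quat_apply]

theorem quatProj_zmul_quat (a : ℂ × ℂ) (y : Zorn) :
    quatProj (zmul (quat a) y) =
      (a.1 * (quatProj y).1 - a.2 * conj (quatProj y).2,
        a.1 * (quatProj y).2 + a.2 * conj (quatProj y).1) := by
  simp only [quatProj, quat_apply, zmul, cross, cross_apply, dotProduct, Fin.sum_univ_three,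
    LinearMap.coe_mk, AddHom.coe_mk, Pi.add_apply, Pi.smul_apply, smul_eq_mul, Pi.single_eq_same,
    Pi.single_eq_of_ne, ne_eq, one_ne_zero, Fin.reduceEq, not_false_eq_true, zero_mul, map_zero,
    add_zero, cons_val_zero, map_add, map_sub, map_mul, map_div₀, map_ofNat,
    Complex.conj_conj, Prod.mk.injEq]
  constructor <;> ring

theorem znorm_quat (a : ℂ × ℂ) : znorm (quat a) = Complex.normSq a.1 + Complex.normSq a.2 := by
  simp [znorm, quat_apply, dotProduct, Fin.sum_univ_three, Complex.mul_conj]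

theorem eq_zero_of_zmul_quat_eq_zero {a : ℂ × ℂ} {y : Zorn} (h : zmul (quat a) y = 0) :
    a = 0 ∨ y = 0 := by
  have hsmul : znorm (quat a) • y = 0 := by rw [← zmul_zconj_zmul, h]; simp [zmul, cross]
  refine (smul_eq_zero.mp hsmul).imp (fun hN => ?_) id
  rw [znorm_quat, ← Complex.ofReal_add, Complex.ofReal_eq_zero] at hN
  have h1 := Complex.normSq_nonneg a.1
  have h2 := Complex.normSq_nonneg a.2
  exact Prod.ext (Complex.normSq_eq_zero.mp (by linarith)) (Complex.normSq_eq_zero.mp (by linarith))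

theorem finrank_le_four_of_le_range_quat {R : Submodule ℝ Zorn}
    (hR : R ≤ LinearMap.range quat) : Module.finrank ℝ R ≤ 4 :=
  calc Module.finrank ℝ R ≤ Module.finrank ℝ (LinearMap.range quat) := Submodule.finrank_mono hR
    _ ≤ Module.finrank ℝ (ℂ × ℂ) := LinearMap.finrank_range_le _
    _ = 4 := by simp [Module.finrank_prod, Complex.finrank_real_complex]

theorem eight_le_finrank_of_range_quat_lt {R : Submodule ℝ Zorn}
    (hmul : ∀ x ∈ R, ∀ y ∈ R, zmul x y ∈ R) (hR : LinearMap.range quat < R) :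
    8 ≤ Module.finrank ℝ R := by
  obtain ⟨w, hwR, hw⟩ := SetLike.exists_of_lt hR
  set y := w - quat (quatProj w)
  have hyR : y ∈ R := R.sub_mem hwR (hR.le ⟨_, rfl⟩)
  have hy : y ≠ 0 := fun h => hw ⟨quatProj w, (sub_eq_zero.mp h).symm⟩
  have hyProj : quatProj y = 0 := by simp [y, quatProj_quat]
  let φ := quat.coprod ((zmulRight y).restrictScalars ℝ ∘ₗ quat)
  have hφR (p) : φ p ∈ R := R.add_mem (hR.le ⟨_, rfl⟩) (hmul _ (hR.le ⟨_, rfl⟩) _ hyR)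
  have hφ : Function.Injective φ := by
    refine (injective_iff_map_eq_zero φ).mpr fun ⟨a, c⟩ h => ?_
    have ha : a = 0 := by
      simpa [φ, zmulRight, quatProj_quat, quatProj_zmul_quat, hyProj, Prod.mk_zero_zero]
        using congrArg quatProj h
    have hc : zmul (quat c) y = 0 := by simpa [φ, zmulRight, ha] using h
    simp [ha, (eq_zero_of_zmul_quat_eq_zero hc).resolve_right hy]
  calc 8 = Module.finrank ℝ ((ℂ × ℂ) × (ℂ × ℂ)) := by
        simp [Module.finrank_prod, Complex.finrank_real_complex]
    _ ≤ Module.finrank ℝ R :=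
        LinearMap.finrank_le_finrank_of_injective (f := φ.codRestrict R hφR)
          (fun p q h => hφ (congrArg Subtype.val h))

/-- there is no real subalgebra R of Z (ℝ-subspace closed under the
Zorn product) with H ⊆ R ⊆ S and dim_ℝ R = 6: no six-dimensional real form of the
sextonions contains the divisional quaternions. -/
theorem no_real_sextonion_form_contains_divisional_quaternions :
    ¬ ∃ R : Submodule ℝ Zorn,
      (∀ x ∈ R, ∀ y ∈ R, zmul x y ∈ R) ∧
      (∀ z : Zorn, inH z → z ∈ R) ∧
      (∀ x ∈ R, inS x) ∧
      Module.finrank ℝ R = 6 := by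
  rintro ⟨R, hmul, hH, -, hdim⟩
  have hHR : LinearMap.range quat ≤ R := by
    rintro _ ⟨a, rfl⟩
    exact hH _ (inH_quat a)
  by_cases hR : R ≤ LinearMap.range quat
  · have hle := finrank_le_four_of_le_range_quat hR
    omega
  · have hge := eight_le_finrank_of_range_quat_lt hmul (lt_of_le_not_ge hHR hR)
    omega
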